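/- arXiv:2512.04406 — 3 statements merged into one kernel-verified Lean document; each statement's English description precedes it below -/
import Mathlib

section
/- Let Y ∈ ℝ^{n×p} have every row of unit Euclidean norm, set S = Y·Yᵀ and X = G(S) − Diag(G(S)·S). Suppose Y is a stationary point of the factorized subproblem, i.e., X·Y = 0. Then S is a minimizer of Φ over M if and only if X is positive semidefinite. -/
open Matrix BigOperators

/-- Frobenius inner product `⟨A, B⟩ = Tr(AᵀB)`. -/
noncomputable def fip {k l : Type*} [Fintype k] [Fintype l] (A B : Matrix k l ℝ) : ℝ :=
  (Aᵀ * B).trace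

/-- The linear operator `𝒜 : S_n → ℝ^m`, `𝒜(X) = (⟨A_i, X⟩)_i`. -/
noncomputable def opA {n m : ℕ} (A : Fin m → Matrix (Fin n) (Fin n) ℝ)
    (X : Matrix (Fin n) (Fin n) ℝ) : Fin m → ℝ :=
  fun i => fip (A i) X

/-- The adjoint operator `𝒜* : ℝ^m → S_n`, `𝒜*(y) = Σ_i y_i A_i`. -/
noncomputable def adjA {n m : ℕ} (A : Fin m → Matrix (Fin n) (Fin n) ℝ)
    (y : Fin m → ℝ) : Matrix (Fin n) (Fin n) ℝ :=
  ∑ i, y i • A i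

/-- The inverse `(𝒜𝒜*)⁻¹` of the operator `𝒜𝒜* : ℝ^m → ℝ^m`. -/
noncomputable def AAinv {n m : ℕ} (A : Fin m → Matrix (Fin n) (Fin n) ℝ) :
    (Fin m → ℝ) → (Fin m → ℝ) :=
  Function.invFun (fun y => opA A (adjA A y))

section Aux

set_option linter.unusedSectionVars false

variable {N : Type*} [Fintype N] [DecidableEq N]

lemma fip_expand (A B : Matrix N N ℝ) : fip A B = ∑ i, ∑ j, A i j * B i j := by
  rw [fip, Matrix.trace]
  simp only [Matrix.diag_apply, Matrix.mul_apply, Matrix.transpose_apply]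
  exact Finset.sum_comm

lemma fip_add_left (A B C : Matrix N N ℝ) : fip (A + B) C = fip A C + fip B C := by
  simp only [fip_expand, Matrix.add_apply, add_mul, Finset.sum_add_distrib]

lemma fip_sub_right (A B C : Matrix N N ℝ) : fip A (B - C) = fip A B - fip A C := by
  simp only [fip_expand, Matrix.sub_apply, mul_sub, Finset.sum_sub_distrib]

lemma fip_diag (d : N → ℝ) (M : Matrix N N ℝ) :
    fip (Matrix.diagonal d) M = ∑ i, d i * M i i := by
  rw [fip_expand]
  refine Finset.sum_congr rfl fun i _ => ?_
  rw [Finset.sum_eq_single i]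
  · simp
  · intro j _ hj
    rw [Matrix.diagonal_apply_ne d (Ne.symm hj), zero_mul]
  · intro h; exact absurd (Finset.mem_univ i) h

lemma fip_sq_nonneg (M : Matrix N N ℝ) : 0 ≤ fip M M := by
  rw [fip_expand]
  exact Finset.sum_nonneg fun i _ => Finset.sum_nonneg fun j _ => mul_self_nonneg _

lemma fip_psd_nonneg {M P : Matrix N N ℝ} (hM : M.PosSemidef) (hP : P.PosSemidef) :
    0 ≤ fip M P := by
  obtain ⟨B, hB⟩ : ∃ B : Matrix N N ℝ, P = Bᴴ * B := by
    open scoped MatrixOrder in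
    have h0 : (0 : Matrix N N ℝ) ≤ P := Matrix.nonneg_iff_posSemidef.mpr hP
    open scoped MatrixOrder in
    have hsa : IsSelfAdjoint (CFC.sqrt P) := (CFC.sqrt_nonneg P).isSelfAdjoint
    open scoped MatrixOrder in
    exact ⟨CFC.sqrt P, by
      rw [← Matrix.star_eq_conjTranspose, hsa.star_eq, CFC.sqrt_mul_sqrt_self P h0]⟩
  have hPij : ∀ i j, P i j = ∑ k, B k i * B k j := by
    intro i j
    rw [hB]
    simp [Matrix.mul_apply, Matrix.conjTranspose_apply]
  rw [fip_expand]
  have key : ∑ i, ∑ j, M i j * P i j = ∑ k, ∑ i, ∑ j, M i j * (B k i * B k j) := by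
    calc ∑ i, ∑ j, M i j * P i j
        = ∑ i, ∑ j, ∑ k, M i j * (B k i * B k j) := by
          refine Finset.sum_congr rfl fun i _ => Finset.sum_congr rfl fun j _ => ?_
          rw [hPij i j, Finset.mul_sum]
      _ = ∑ i, ∑ k, ∑ j, M i j * (B k i * B k j) := by
          exact Finset.sum_congr rfl fun i _ => Finset.sum_comm
      _ = ∑ k, ∑ i, ∑ j, M i j * (B k i * B k j) := Finset.sum_comm
  rw [key]
  refine Finset.sum_nonneg fun k _ => ?_
  have hx := hM.dotProduct_mulVec_nonneg (fun i => B k i)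
  have heq : star (fun i => B k i) ⬝ᵥ (M *ᵥ fun i => B k i)
      = ∑ i, ∑ j, M i j * (B k i * B k j) := by
    simp only [dotProduct, Matrix.mulVec, Pi.star_apply, star_trivial, Finset.mul_sum]
    exact Finset.sum_congr rfl fun i _ => Finset.sum_congr rfl fun j _ => by ring
  rw [heq] at hx
  exact hx

lemma sum_key' (H : Matrix N N ℝ) (a : N → ℝ)
    (hrow : ∀ i, ∑ j, H i j = 0) (hcol : ∀ j, ∑ i, H i j = 0) :
    ∑ i, ∑ j, H i j * (a i * a j)
      = -(1/2) * ∑ i, ∑ j, H i j * (a i - a j)^2 := by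
  have h1 : ∑ i, ∑ j, H i j * a i ^ 2 = 0 := by
    refine Finset.sum_eq_zero fun i _ => ?_
    rw [← Finset.sum_mul, hrow i, zero_mul]
  have h2 : ∑ i, ∑ j, H i j * a j ^ 2 = 0 := by
    rw [Finset.sum_comm]
    refine Finset.sum_eq_zero fun j _ => ?_
    rw [← Finset.sum_mul, hcol j, zero_mul]
  have h3 : ∑ i, ∑ j, H i j * (a i - a j)^2
      = ∑ i, ∑ j, (H i j * a i ^ 2 + H i j * a j ^ 2 - 2 * (H i j * (a i * a j))) := by
    exact Finset.sum_congr rfl fun i _ => Finset.sum_congr rfl fun j _ => by ring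
  have h4 : ∑ i, ∑ j, (H i j * a i ^ 2 + H i j * a j ^ 2 - 2 * (H i j * (a i * a j)))
      = (∑ i, ∑ j, H i j * a i ^ 2) + (∑ i, ∑ j, H i j * a j ^ 2)
        - 2 * ∑ i, ∑ j, H i j * (a i * a j) := by
    simp only [Finset.sum_sub_distrib, Finset.sum_add_distrib, Finset.mul_sum]
  rw [h3, h4, h1, h2]
  ring

lemma isHermitian_of_transpose {M : Matrix N N ℝ} (h : Mᵀ = M) : M.IsHermitian := by
  have hct : Mᴴ = Mᵀ := by
    ext i j
    simp [Matrix.conjTranspose_apply]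
  show Mᴴ = M
  rw [hct, h]

end Aux

set_option maxHeartbeats 1600000 in
/-- if `Y` has unit-norm rows, `S = Y·Yᵀ`,
`X = G(S) − Diag(G(S)·S)` and `X·Y = 0` (stationarity), then `S` is a minimizer
of `Φ` over `M = {S PSD with unit diagonal}` if and only if `X ⪰ 0`. -/
theorem stmt9 {n m p : ℕ} (hn : 0 < n) (hm : 0 < m)
    (A : Fin m → Matrix (Fin n) (Fin n) ℝ) (hA : ∀ i, (A i).IsSymm)
    (hinv : Function.Bijective (fun y : Fin m → ℝ => opA A (adjA A y)))
    (b : Fin m → ℝ) (C : Matrix (Fin n) (Fin n) ℝ) (hC : C.IsSymm)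
    (D : Matrix (Fin n) (Fin n) ℝ) (hD : D = adjA A (AAinv A b))
    (Xt : Matrix (Fin n) (Fin n) ℝ) (hXt : Xt.IsSymm)
    (y0 : Fin m → ℝ) (σ : ℝ) (hσ : 0 < σ)
    (Phi : Matrix (Fin n) (Fin n) ℝ → ℝ)
    (hPhi : ∀ S, Phi S = fip D (S + C) - fip Xt (adjA A y0 - S - C)
        + σ / 2 * fip (adjA A y0 - S - C) (adjA A y0 - S - C))
    (G : Matrix (Fin n) (Fin n) ℝ → Matrix (Fin n) (Fin n) ℝ)
    (hG : ∀ S, G S = Xt - σ • (adjA A y0 - S - C) + D)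
    (Y : Matrix (Fin n) (Fin p) ℝ) (hY : ∀ i, ∑ j, (Y i j) ^ 2 = 1)
    (S X : Matrix (Fin n) (Fin n) ℝ)
    (hS : S = Y * Yᵀ)
    (hX : X = G S - Matrix.diagonal (Matrix.diag (G S * S)))
    (hstat : X * Y = 0) :
    (∀ S' : Matrix (Fin n) (Fin n) ℝ, S'.PosSemidef → (∀ i, S' i i = 1) → Phi S ≤ Phi S')
      ↔ X.PosSemidef := by
  -- basic symmetry facts
  have hSsym : Sᵀ = S := by rw [hS, Matrix.transpose_mul, Matrix.transpose_transpose]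
  have hadj : ∀ y : Fin m → ℝ, (adjA A y)ᵀ = adjA A y := by
    intro y
    show (∑ i, y i • A i)ᵀ = ∑ i, y i • A i
    rw [Matrix.transpose_sum]
    refine Finset.sum_congr rfl fun i _ => ?_
    rw [Matrix.transpose_smul, hA i]
  have hDsym : Dᵀ = D := by rw [hD]; exact hadj _
  have hGSsym : (G S)ᵀ = G S := by
    rw [hG]
    simp only [Matrix.transpose_add, Matrix.transpose_sub, Matrix.transpose_smul]
    rw [hXt, hC, hSsym, hadj, hDsym]
  have hXsym : Xᵀ = X := by
    rw [hX]
    simp only [Matrix.transpose_sub, Matrix.diagonal_transpose]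
    rw [hGSsym]
  have hXS : X * S = 0 := by rw [hS, ← Matrix.mul_assoc, hstat, Matrix.zero_mul]
  have hfipXS : fip X S = 0 := by
    show (Xᵀ * S).trace = 0
    rw [hXsym, hXS, Matrix.trace_zero]
  have hSdiag : ∀ i, S i i = 1 := by
    intro i
    rw [hS]
    have h1 : (Y * Yᵀ) i i = ∑ j, Y i j * Y i j := by
      simp [Matrix.mul_apply]
    rw [h1, ← hY i]
    exact Finset.sum_congr rfl fun j _ => by ring
  have hSe : ∀ i j, S i j = S j i := by
    intro i j
    have h := congrFun (congrFun hSsym.symm i) j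
    simpa using h
  have hXe : ∀ i j, X i j = X j i := by
    intro i j
    have h := congrFun (congrFun hXsym.symm i) j
    simpa using h
  have hGSd : G S = X + Matrix.diagonal (Matrix.diag (G S * S)) := by
    rw [hX, sub_add_cancel]
  -- quadratic expansion of Phi
  have hexp : ∀ S2, Phi S2 = Phi S + fip (G S) (S2 - S) + σ/2 * fip (S2 - S) (S2 - S) := by
    intro S2
    simp only [hPhi, hG, fip_expand, Matrix.sub_apply, Matrix.add_apply, Matrix.smul_apply,
      smul_eq_mul, Finset.mul_sum, ← Finset.sum_sub_distrib, ← Finset.sum_add_distrib]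
    exact Finset.sum_congr rfl fun i _ => Finset.sum_congr rfl fun j _ => by ring
  -- gradient term against feasible direction
  have hfipG : ∀ S2 : Matrix (Fin n) (Fin n) ℝ, (∀ i, S2 i i = 1) →
      fip (G S) (S2 - S) = fip X S2 := by
    intro S2 hd
    have hdz : ∀ i, (S2 - S) i i = 0 := fun i => by
      simp [Matrix.sub_apply, hd i, hSdiag i]
    rw [hGSd, fip_add_left, fip_diag, fip_sub_right, hfipXS]
    simp [hdz]
  constructor
  · -- minimizer → X PSD
    intro hmin
    refine Matrix.PosSemidef.of_dotProduct_mulVec_nonneg (isHermitian_of_transpose hXsym) fun v => ?_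
    by_contra hc
    push_neg at hc
    set Q := ∑ i, ∑ j, X i j * (v i * v j) with hQdef
    have hQeq : star v ⬝ᵥ X *ᵥ v = Q := by
      rw [hQdef]
      simp only [dotProduct, Matrix.mulVec, Pi.star_apply, star_trivial, Finset.mul_sum]
      exact Finset.sum_congr rfl fun i _ => Finset.sum_congr rfl fun j _ => by ring
    rw [hQeq] at hc
    clear_value Q
    -- hc : Q < 0
    set V := ∑ i, v i ^ 2 with hVdef
    have hVnn : 0 ≤ V := Finset.sum_nonneg fun i _ => sq_nonneg _
    have hvV : ∀ i, v i ^ 2 ≤ V :=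
      fun i => Finset.single_le_sum (fun j _ => sq_nonneg (v j)) (Finset.mem_univ i)
    clear_value V
    set K₁ := ∑ i : Fin n, ∑ j : Fin n, |X i j * S i j| * (v i ^ 2 - v j ^ 2) ^ 2 with hK1def
    set K₂ := ∑ i : Fin n, ∑ j : Fin n, ((v i ^ 2 + v j ^ 2) * |S i j| + |v i * v j|) ^ 2 with hK2def
    have hK1nn : 0 ≤ K₁ := Finset.sum_nonneg fun i _ => Finset.sum_nonneg fun j _ =>
      mul_nonneg (abs_nonneg _) (sq_nonneg _)
    have hK2nn : 0 ≤ K₂ := Finset.sum_nonneg fun i _ => Finset.sum_nonneg fun j _ => sq_nonneg _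
    clear_value K₁ K₂
    set K := K₁/2 + σ/2*K₂ + 1 with hKdef
    have hK : 0 < K := by
      have : 0 ≤ σ/2*K₂ := mul_nonneg (by linarith) hK2nn
      rw [hKdef]; linarith
    clear_value K
    set τ := min (-Q/(2*K)) (3/(4*(V+1))) with hτdef
    have hτ : 0 < τ := by
      refine lt_min (div_pos (by linarith) (by linarith)) (by positivity)
    have hτa : τ ≤ -Q/(2*K) := min_le_left _ _
    have hτb : τ ≤ 3/(4*(V+1)) := min_le_right _ _
    clear_value τ
    set t := Real.sqrt τ with htdef
    have ht2 : t^2 = τ := Real.sq_sqrt hτ.le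
    have ht2pos : 0 < t^2 := by rw [ht2]; exact hτ
    have ht2a : t^2 ≤ -Q/(2*K) := by rw [ht2]; exact hτa
    have ht2b : t^2 ≤ 3/(4*(V+1)) := by rw [ht2]; exact hτb
    clear_value t
    have htK : t^2 * K ≤ -Q/2 := by
      have h := (le_div_iff₀ (by linarith : (0:ℝ) < 2*K)).mp ht2a
      nlinarith [h]
    have htv : ∀ i, t^2 * v i ^ 2 ≤ 3/4 := by
      intro i
      have h := (le_div_iff₀ (by positivity : (0:ℝ) < 4*(V+1))).mp ht2b
      nlinarith [hvV i, sq_nonneg (v i), ht2pos.le, hVnn]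
    set a : Fin n → ℝ := fun i => Real.sqrt (1 - t^2 * v i ^ 2) with hadef
    have hann : ∀ i, 0 ≤ a i := fun i => Real.sqrt_nonneg _
    have ha2 : ∀ i, a i ^ 2 = 1 - t^2 * v i ^ 2 := fun i => Real.sq_sqrt (by linarith [htv i])
    clear_value a
    have halb : ∀ i, 1/2 ≤ a i := by
      intro i
      nlinarith [ha2 i, hann i, htv i]
    have haub : ∀ i, a i ≤ 1 := by
      intro i
      nlinarith [ha2 i, hann i, mul_nonneg (sq_nonneg t) (sq_nonneg (v i))]
    set S' : Matrix (Fin n) (Fin n) ℝ :=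
      Matrix.of (fun i j => a i * a j * S i j + t^2 * (v i * v j)) with hS'def
    have hS'entry : ∀ i j, S' i j = a i * a j * S i j + t^2 * (v i * v j) := fun i j => rfl
    have hSentry : ∀ i j, S i j = ∑ k, Y i k * Y j k := by
      intro i j
      rw [hS]
      simp [Matrix.mul_apply]
    -- S' is PSD (Gram matrix)
    have hS'psd : S'.PosSemidef := by
      set Z : Matrix (Fin n) (Fin p ⊕ Unit) ℝ :=
        Matrix.of (fun i k => Sum.elim (fun j => a i * Y i j) (fun _ => t * v i) k) with hZdef
      have hfact : S' = Z * Zᴴ := by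
        ext i j
        rw [hS'entry i j, hSentry i j]
        simp only [Matrix.mul_apply, Matrix.conjTranspose_apply, hZdef, Matrix.of_apply,
          Fintype.sum_sum_type, Sum.elim_inl, Sum.elim_inr, star_trivial]
        simp only [Finset.univ_unique, Finset.sum_singleton]
        rw [Finset.mul_sum]
        have : ∀ k, a i * a j * (Y i k * Y j k) = a i * Y i k * (a j * Y j k) := fun k => by ring
        rw [Finset.sum_congr rfl fun k _ => this k]
        ring
      rw [hfact]
      exact Matrix.posSemidef_self_mul_conjTranspose Z
    have hS'diag : ∀ i, S' i i = 1 := by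
      intro i
      rw [hS'entry i i, hSdiag i]
      nlinarith [ha2 i]
    -- apply minimality
    have hineq := hmin S' hS'psd hS'diag
    rw [hexp S'] at hineq
    have h0 : 0 ≤ fip (G S) (S' - S) + σ/2 * fip (S' - S) (S' - S) := by linarith
    rw [hfipG S' hS'diag] at h0
    -- decompose fip X S'
    set T := ∑ i : Fin n, ∑ j : Fin n, (X i j * S i j) * (a i * a j) with hTdef
    have hfipXS' : fip X S' = T + t^2 * Q := by
      rw [fip_expand, hTdef, hQdef]
      simp only [hS'entry, Finset.mul_sum, ← Finset.sum_add_distrib]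
      exact Finset.sum_congr rfl fun i _ => Finset.sum_congr rfl fun j _ => by ring
    -- row and column sums of Hadamard product vanish
    have hrow : ∀ i, ∑ j, X i j * S i j = 0 := by
      intro i
      have h := congrFun (congrFun hXS i) i
      rw [Matrix.mul_apply] at h
      simp only [Matrix.zero_apply] at h
      rw [← h]
      exact Finset.sum_congr rfl fun j _ => by rw [hSe i j]
    have hcol : ∀ j, ∑ i, X i j * S i j = 0 := by
      intro j
      rw [← hrow j]
      exact Finset.sum_congr rfl fun i _ => by rw [hXe i j, hSe i j]
    -- bound T
    have hTkey : T = -(1/2) * ∑ i, ∑ j, (X i j * S i j) * (a i - a j)^2 := by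
      rw [hTdef]
      exact sum_key' (Matrix.of fun i j => X i j * S i j) a hrow hcol
    have habound : ∀ i j, (a i - a j)^2 ≤ t^4 * (v i ^2 - v j ^2)^2 := by
      intro i j
      have h1 : (a i - a j)^2 * (a i + a j)^2
          = ((1 - t^2 * v i ^2) - (1 - t^2 * v j ^2))^2 := by
        rw [← ha2 i, ← ha2 j]; ring
      have hsum : 1 ≤ (a i + a j)^2 := by nlinarith [halb i, halb j]
      have h2 : (a i - a j)^2 * 1 ≤ (a i - a j)^2 * (a i + a j)^2 :=
        mul_le_mul_of_nonneg_left hsum (sq_nonneg (a i - a j))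
      nlinarith [h1, h2]
    have hTbound : T ≤ t^4 * K₁ / 2 := by
      rw [hTkey]
      have hE : -(t^4 * K₁) ≤ ∑ i, ∑ j, (X i j * S i j) * (a i - a j)^2 := by
        rw [hK1def]
        have step : ∀ i j : Fin n, -( |X i j * S i j| * (t^4 * (v i ^2 - v j ^2)^2))
            ≤ (X i j * S i j) * (a i - a j)^2 := by
          intro i j
          have h1 := mul_le_mul_of_nonneg_left (habound i j) (abs_nonneg (X i j * S i j))
          nlinarith [neg_abs_le (X i j * S i j), sq_nonneg (a i - a j), abs_nonneg (X i j * S i j)]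
        calc -(t^4 * ∑ i : Fin n, ∑ j : Fin n, |X i j * S i j| * (v i ^ 2 - v j ^ 2) ^ 2)
            = ∑ i : Fin n, ∑ j : Fin n, -( |X i j * S i j| * (t^4 * (v i ^2 - v j ^2)^2)) := by
              simp only [Finset.mul_sum, ← Finset.sum_neg_distrib]
              exact Finset.sum_congr rfl fun i _ => Finset.sum_congr rfl fun j _ => by ring
          _ ≤ ∑ i, ∑ j, (X i j * S i j) * (a i - a j)^2 :=
              Finset.sum_le_sum fun i _ => Finset.sum_le_sum fun j _ => step i j
      linarith
    -- bound the quadratic remainder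
    have hFbound : fip (S' - S) (S' - S) ≤ t^4 * K₂ := by
      rw [fip_expand]
      have hterm : ∀ i j : Fin n, (S' - S) i j * (S' - S) i j
          ≤ t^4 * ((v i ^2 + v j ^2) * |S i j| + |v i * v j|)^2 := by
        intro i j
        have hdije : (S' - S) i j = (a i * a j - 1) * S i j + t^2 * (v i * v j) := by
          rw [Matrix.sub_apply, hS'entry i j]; ring
        have h1 : 1 - a i * a j ≤ t^2 * (v i ^2 + v j ^2) := by
          nlinarith [ha2 i, ha2 j, halb i, halb j, haub i, haub j,
            mul_nonneg (sub_nonneg.2 (haub i)) (sub_nonneg.2 (haub j))]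
        have h2 : a i * a j ≤ 1 := by nlinarith [haub i, haub j, hann i, hann j]
        have habs : |(S' - S) i j| ≤ t^2 * ((v i ^2 + v j ^2) * |S i j| + |v i * v j|) := by
          rw [hdije]
          calc |(a i * a j - 1) * S i j + t^2 * (v i * v j)|
              ≤ |(a i * a j - 1) * S i j| + |t^2 * (v i * v j)| := abs_add_le _ _
            _ = (1 - a i * a j) * |S i j| + t^2 * |v i * v j| := by
                rw [abs_mul, abs_mul, abs_of_nonpos (by linarith : a i * a j - 1 ≤ 0),
                  abs_of_nonneg (sq_nonneg t)]
                ring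
            _ ≤ t^2 * (v i ^2 + v j ^2) * |S i j| + t^2 * |v i * v j| := by
                have := mul_le_mul_of_nonneg_right h1 (abs_nonneg (S i j))
                linarith
            _ = t^2 * ((v i ^2 + v j ^2) * |S i j| + |v i * v j|) := by ring
        have hsq := pow_le_pow_left₀ (abs_nonneg ((S' - S) i j)) habs 2
        have hid : |(S' - S) i j| ^ 2 = (S' - S) i j * (S' - S) i j := by
          rw [sq_abs]; ring
        rw [hid] at hsq
        calc (S' - S) i j * (S' - S) i j
            ≤ (t^2 * ((v i ^2 + v j ^2) * |S i j| + |v i * v j|))^2 := hsq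
          _ = t^4 * ((v i ^2 + v j ^2) * |S i j| + |v i * v j|)^2 := by ring
      calc ∑ i, ∑ j, (S' - S) i j * (S' - S) i j
          ≤ ∑ i : Fin n, ∑ j : Fin n, t^4 * ((v i ^2 + v j ^2) * |S i j| + |v i * v j|)^2 :=
            Finset.sum_le_sum fun i _ => Finset.sum_le_sum fun j _ => hterm i j
        _ = t^4 * K₂ := by
            rw [hK2def]
            simp only [Finset.mul_sum]
    -- final contradiction
    rw [hfipXS'] at h0
    have e1 : σ/2 * fip (S' - S) (S' - S) ≤ σ/2 * (t^4 * K₂) :=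
      mul_le_mul_of_nonneg_left hFbound (by linarith)
    have e2 : 0 ≤ t^4 * K₁ / 2 + t^2 * Q + σ/2 * (t^4 * K₂) := by linarith
    have e3 : t^4 * K₁ / 2 + σ/2 * (t^4 * K₂) = t^4 * K - t^4 := by rw [hKdef]; ring
    have e4 : t^4 * K ≤ t^2 * (-Q/2) := by
      have h := mul_le_mul_of_nonneg_left htK (le_of_lt ht2pos)
      calc t^4 * K = t^2 * (t^2 * K) := by ring
        _ ≤ t^2 * (-Q/2) := h
    have e6 : 0 < t^2 * (-Q) := mul_pos ht2pos (by linarith)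
    nlinarith [e2, e3, e4, e6, sq_nonneg (t^2)]
  · -- X PSD → minimizer
    intro hXpsd S' hS'psd hS'diag
    rw [hexp S', hfipG S' hS'diag]
    have h1 : 0 ≤ fip X S' := fip_psd_nonneg hXpsd hS'psd
    have h2 : 0 ≤ fip (S' - S) (S' - S) := fip_sq_nonneg _
    nlinarith [h1, h2, hσ]
end

section
/- Let X̃ ∈ S_n with 𝒜(X̃) = 0, let y⁰ ∈ ℝ^m, let Y ∈ ℝ^{n×p} have every row of unit Euclidean norm, and set S = Y·Yᵀ. Suppose 𝒜*(y⁰) = S + C, and with G = X̃ + D and X = G − Diag(G·S), suppose X·Y = 0 and X is positive semidefinite. Then (S, y⁰) is optimal for the problem (DSDP'): for every y′ ∈ ℝ^m such that S′ := 𝒜*(y′) − C is positive semidefinite with every diagonal entry equal to 1, one has ⟨D, S′ + C⟩ ≥ ⟨D, S + C⟩ (equivalently bᵀy′ ≥ bᵀy⁰). -/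
open Matrix BigOperators

/- ### Auxiliary lemmas -/

lemma fip_comm {k : Type*} [Fintype k] (A B : Matrix k k ℝ) : fip A B = fip B A := by
  rw [fip, fip, ← Matrix.trace_transpose, Matrix.transpose_mul, Matrix.transpose_transpose]

lemma fip_sub_right_s10 {k : Type*} [Fintype k] (M P Q : Matrix k k ℝ) :
    fip M (P - Q) = fip M P - fip M Q := by
  simp [fip, Matrix.mul_sub]

lemma fip_add_right {k : Type*} [Fintype k] (M P Q : Matrix k k ℝ) :
    fip M (P + Q) = fip M P + fip M Q := by
  simp [fip, Matrix.mul_add]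

lemma fip_sub_left {k : Type*} [Fintype k] (P Q M : Matrix k k ℝ) :
    fip (P - Q) M = fip P M - fip Q M := by
  simp [fip, Matrix.sub_mul, Matrix.transpose_sub]

lemma fip_add_left_s10 {k : Type*} [Fintype k] (P Q M : Matrix k k ℝ) :
    fip (P + Q) M = fip P M + fip Q M := by
  simp [fip, Matrix.add_mul, Matrix.transpose_add]

lemma psd_diag_nonneg {k : Type*} [Fintype k] [DecidableEq k] {M : Matrix k k ℝ}
    (h : M.PosSemidef) (i : k) : 0 ≤ M i i := by
  have h2 := h.dotProduct_mulVec_nonneg (Pi.single i 1)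
  have e : star (Pi.single i (1:ℝ)) ⬝ᵥ M *ᵥ Pi.single i 1 = M i i := by
    simp [dotProduct, Matrix.mulVec, Pi.single_apply, Finset.sum_ite_eq,
      Finset.sum_ite_eq', mul_comm]
  rwa [e] at h2

lemma trace_mul_psd_nonneg {k : Type*} [Fintype k] [DecidableEq k] {M N : Matrix k k ℝ}
    (hM : M.PosSemidef) (hN : N.PosSemidef) : 0 ≤ (M * N).trace := by
  obtain ⟨B, rfl⟩ : ∃ B : Matrix k k ℝ, M = Bᴴ * B := by
    open scoped MatrixOrder in exact CStarAlgebra.nonneg_iff_eq_star_mul_self.mp hM.nonneg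
  rw [Matrix.mul_assoc, Matrix.trace_mul_comm]
  have hpsd : (B * N * Bᴴ).PosSemidef := hN.mul_mul_conjTranspose_same B
  rw [Matrix.trace]
  exact Finset.sum_nonneg fun i _ => psd_diag_nonneg hpsd i

lemma fip_diagonal {k : Type*} [Fintype k] [DecidableEq k] (d : k → ℝ) (M : Matrix k k ℝ) :
    fip (Matrix.diagonal d) M = ∑ i, d i * M i i := by
  simp [fip, Matrix.trace, Matrix.diag, Matrix.diagonal_transpose, Matrix.diagonal_mul]

/-- if `𝒜(X̃) = 0`, `Y` has unit-norm rows, `S = Y·Yᵀ`,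
`𝒜*(y⁰) = S + C`, `G = X̃ + D`, `X = G − Diag(G·S)`, `X·Y = 0` and `X ⪰ 0`,
then `(S, y⁰)` is optimal for (DSDP'): for every feasible `y′`
(i.e. `S′ = 𝒜*(y′) − C` is PSD with unit diagonal), `⟨D, S′+C⟩ ≥ ⟨D, S+C⟩`. -/
theorem stmt10 {n m p : ℕ} (hn : 0 < n) (hm : 0 < m)
    (A : Fin m → Matrix (Fin n) (Fin n) ℝ) (hA : ∀ i, (A i).IsSymm)
    (hinv : Function.Bijective (fun y : Fin m → ℝ => opA A (adjA A y)))
    (b : Fin m → ℝ) (C : Matrix (Fin n) (Fin n) ℝ) (hC : C.IsSymm)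
    (D : Matrix (Fin n) (Fin n) ℝ) (hD : D = adjA A (AAinv A b))
    (Xt : Matrix (Fin n) (Fin n) ℝ) (hXt : Xt.IsSymm)
    (hAXt : opA A Xt = 0)
    (y0 : Fin m → ℝ)
    (Y : Matrix (Fin n) (Fin p) ℝ) (hY : ∀ i, ∑ j, (Y i j) ^ 2 = 1)
    (S : Matrix (Fin n) (Fin n) ℝ) (hS : S = Y * Yᵀ)
    (hfeas : adjA A y0 = S + C)
    (G X : Matrix (Fin n) (Fin n) ℝ)
    (hG : G = Xt + D)
    (hX : X = G - Matrix.diagonal (Matrix.diag (G * S)))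
    (hstat : X * Y = 0) (hXpsd : X.PosSemidef) :
    ∀ y' : Fin m → ℝ, (adjA A y' - C).PosSemidef → (∀ i, (adjA A y' - C) i i = 1) →
      fip D (S + C) ≤ fip D ((adjA A y' - C) + C) := by
  intro y' hpsd hdiag
  obtain ⟨S', hS'⟩ : ∃ S', adjA A y' - C = S' := ⟨_, rfl⟩
  rw [hS'] at hpsd hdiag ⊢
  -- it suffices to show `0 ≤ fip D (S' - S)`
  suffices h : 0 ≤ fip D (S' - S) by
    have e : fip D (S' + C) - fip D (S + C) = fip D (S' - S) := by
      rw [fip_add_right, fip_add_right, fip_sub_right_s10]; ring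
    linarith
  -- D = G - Xt
  have hDG : D = G - Xt := by rw [hG]; abel
  -- S' - S = adjA A (y' - y0)
  have hSS' : S' - S = adjA A (y' - y0) := by
    have e1 : adjA A (y' - y0) = adjA A y' - adjA A y0 := by
      unfold adjA
      rw [← Finset.sum_sub_distrib]
      congr 1; funext i
      rw [Pi.sub_apply, sub_smul]
    have hSv : S = adjA A y0 - C := by rw [hfeas]; abel
    rw [e1, ← hS', hSv]; abel
  -- fip Xt (adjA A z) = 0 for every z
  have hXtzero : ∀ z : Fin m → ℝ, fip Xt (adjA A z) = 0 := by
    intro z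
    have e2 : fip Xt (adjA A z) = ∑ i, z i * fip Xt (A i) := by
      simp only [fip, adjA, Matrix.mul_sum, Matrix.trace_sum, Matrix.mul_smul,
        Matrix.trace_smul, smul_eq_mul]
    have h0 : ∀ i, fip Xt (A i) = 0 := fun i => by
      rw [fip_comm]; exact congrFun hAXt i
    rw [e2]
    simp [h0]
  -- decompose G
  have hGX : G = X + Matrix.diagonal (Matrix.diag (G * S)) := by rw [hX]; abel
  -- X is symmetric (over ℝ)
  have hXsymm : Xᵀ = X := hXpsd.isHermitian
  -- fip X S = 0
  have hXS : fip X S = 0 := by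
    rw [fip, hXsymm, hS, ← Matrix.mul_assoc, hstat, Matrix.zero_mul, Matrix.trace_zero]
  -- fip X S' ≥ 0
  have hXS' : 0 ≤ fip X S' := by
    rw [fip, hXsymm]
    exact trace_mul_psd_nonneg hXpsd hpsd
  -- diagonal part: S and S' both have unit diagonal
  have hSdiag : ∀ i, S i i = 1 := by
    intro i
    rw [hS, Matrix.mul_apply]
    simpa [sq] using hY i
  have hdiagpart : fip (Matrix.diagonal (Matrix.diag (G * S))) (S' - S) = 0 := by
    rw [fip_diagonal]
    apply Finset.sum_eq_zero
    intro i _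
    rw [Matrix.sub_apply, hdiag i, hSdiag i]
    ring
  -- assemble
  rw [hDG, fip_sub_left, hSS', hXtzero, sub_zero, ← hSS', hGX, fip_add_left_s10,
    fip_sub_right_s10, hXS, sub_zero, hdiagpart, add_zero]
  exact hXS'
end

section
/- Let 0 < σ_min ≤ σ_max, let (σ_k)_{k≥1} be a sequence with σ_k ∈ [σ_min, σ_max], let (X̃^k)_{k≥1} and (R^k)_{k≥2} be sequences in S_n with X̃^{k+1} = X̃^k − σ_k·R^{k+1} for all k ≥ 1, let X̃* ∈ S_n, and let (ε_k), (τ_k) be nonnegative sequences with Σ_k ε_k < ∞ and Σ_k τ_k < ∞. If ⟨X̃^k − X̃*, R^{k+1}⟩ ≥ σ_k·‖R^{k+1}‖² − n·τ_k − √n·ε_k for all k ≥ 1, then lim_{k→∞} ‖R^k‖ = 0. -/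
open Matrix BigOperators Filter

/-- Frobenius norm `‖A‖ = √Tr(AᵀA)`. -/
noncomputable def frobNorm {k l : Type*} [Fintype k] [Fintype l] (A : Matrix k l ℝ) : ℝ :=
  Real.sqrt (fip A A)

lemma fip_eq_sum {k l : Type*} [Fintype k] [Fintype l] (A B : Matrix k l ℝ) :
    fip A B = ∑ j, ∑ i, A i j * B i j := by
  simp [fip, Matrix.trace, Matrix.mul_apply, Matrix.diag]

lemma fip_self_nonneg {k l : Type*} [Fintype k] [Fintype l] (A : Matrix k l ℝ) :
    0 ≤ fip A A := by
  rw [fip_eq_sum]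
  refine Finset.sum_nonneg fun j _ => Finset.sum_nonneg fun i _ => mul_self_nonneg _

lemma fip_expand_s17 {k l : Type*} [Fintype k] [Fintype l] (D E : Matrix k l ℝ) (s : ℝ) :
    fip (D - s • E) (D - s • E) = fip D D - 2 * s * fip D E + s ^ 2 * fip E E := by
  simp only [fip_eq_sum, Finset.mul_sum, ← Finset.sum_sub_distrib, ← Finset.sum_add_distrib]
  refine Finset.sum_congr rfl fun j _ => Finset.sum_congr rfl fun i _ => ?_
  simp [Matrix.sub_apply, Matrix.smul_apply, smul_eq_mul]
  ring

/-- Lemma 5.5 of the paper: under the ADMM update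
`X̃^{k+1} = X̃^k − σ_k R^{k+1}` with `σ_k ∈ [σ_min, σ_max]`, summable error
sequences `(ε_k), (τ_k)`, and the key inequality
`⟨X̃^k − X̃*, R^{k+1}⟩ ≥ σ_k‖R^{k+1}‖² − nτ_k − √n·ε_k` for all `k ≥ 1`,
one has `lim_{k→∞} ‖R^k‖ = 0`. -/
theorem stmt17 {n : ℕ} (σmin σmax : ℝ) (h0 : 0 < σmin) (h1 : σmin ≤ σmax)
    (σ : ℕ → ℝ) (hσ : ∀ k, 1 ≤ k → σ k ∈ Set.Icc σmin σmax)
    (Xt R : ℕ → Matrix (Fin n) (Fin n) ℝ)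
    (hupd : ∀ k, 1 ≤ k → Xt (k + 1) = Xt k - σ k • R (k + 1))
    (Xtstar : Matrix (Fin n) (Fin n) ℝ)
    (ε τ : ℕ → ℝ) (hε : ∀ k, 0 ≤ ε k) (hτ : ∀ k, 0 ≤ τ k)
    (hεsum : Summable ε) (hτsum : Summable τ)
    (hineq : ∀ k, 1 ≤ k →
      σ k * fip (R (k + 1)) (R (k + 1)) - (n : ℝ) * τ k - Real.sqrt n * ε k
        ≤ fip (Xt k - Xtstar) (R (k + 1))) :
    Tendsto (fun k => frobNorm (R k)) atTop (nhds 0) := by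
  set q : ℕ → ℝ := fun m => fip (R m) (R m) with hq_def
  set c : ℕ → ℝ := fun m => 2 * σmax * ((n : ℝ) * τ m + Real.sqrt n * ε m) with hc_def
  set φ : ℕ → ℝ := fun m => fip (Xt (m + 1) - Xtstar) (Xt (m + 1) - Xtstar) with hφ_def
  have hqnn : ∀ m, 0 ≤ q m := fun m => fip_self_nonneg _
  have hcnn : ∀ m, 0 ≤ c m := by
    intro m
    have hσmax : 0 < σmax := lt_of_lt_of_le h0 h1
    have hnn : 0 ≤ (n : ℝ) * τ m + Real.sqrt n * ε m :=
      add_nonneg (mul_nonneg (Nat.cast_nonneg n) (hτ m))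
        (mul_nonneg (Real.sqrt_nonneg _) (hε m))
    exact mul_nonneg (by linarith) hnn
  -- one-step inequality
  have hstep : ∀ k : ℕ, φ (k + 1) + σmin ^ 2 * q (k + 2) ≤ φ k + c (k + 1) := by
    intro k
    have hk1 : 1 ≤ k + 1 := by omega
    have hs := hσ (k + 1) hk1
    have hs0 : 0 < σ (k + 1) := lt_of_lt_of_le h0 hs.1
    have hup := hupd (k + 1) hk1
    have hXt : Xt (k + 2) - Xtstar = (Xt (k + 1) - Xtstar) - σ (k + 1) • R (k + 2) := by
      rw [hup]; abel
    have hφ1 : φ (k + 1)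
        = φ k - 2 * σ (k + 1) * fip (Xt (k + 1) - Xtstar) (R (k + 2))
            + σ (k + 1) ^ 2 * q (k + 2) := by
      show fip (Xt (k + 2) - Xtstar) (Xt (k + 2) - Xtstar) = _
      rw [hXt, fip_expand_s17]
    have hin := hineq (k + 1) hk1
    have hmul : -(2 * σ (k + 1) * fip (Xt (k + 1) - Xtstar) (R (k + 2)))
        ≤ -(2 * σ (k + 1) * (σ (k + 1) * q (k + 2) - (n : ℝ) * τ (k + 1)
            - Real.sqrt n * ε (k + 1))) := by
      have h2s : 0 < 2 * σ (k + 1) := by linarith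
      nlinarith [hin]
    have hq2 : σmin ^ 2 * q (k + 2) ≤ σ (k + 1) ^ 2 * q (k + 2) := by
      exact mul_le_mul_of_nonneg_right (pow_le_pow_left₀ h0.le hs.1 2) (hqnn _)
    have hc2 : 2 * σ (k + 1) * ((n : ℝ) * τ (k + 1) + Real.sqrt n * ε (k + 1)) ≤ c (k + 1) := by
      have hnn : 0 ≤ (n : ℝ) * τ (k + 1) + Real.sqrt n * ε (k + 1) :=
        add_nonneg (mul_nonneg (Nat.cast_nonneg n) (hτ _))
          (mul_nonneg (Real.sqrt_nonneg _) (hε _))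
      have : σ (k + 1) ≤ σmax := hs.2
      simp only [hc_def]
      nlinarith
    nlinarith [hφ1, hmul, hq2, hc2]
  have hφnn : ∀ m, 0 ≤ φ m := fun m => fip_self_nonneg _
  -- telescoped bound
  have htel : ∀ N : ℕ, φ N + σmin ^ 2 * ∑ j ∈ Finset.range N, q (j + 2)
      ≤ φ 0 + ∑ j ∈ Finset.range N, c (j + 1) := by
    intro N
    induction N with
    | zero => simp
    | succ N ih =>
      rw [Finset.sum_range_succ, Finset.sum_range_succ, mul_add]
      have := hstep N
      linarith
  -- c shifted is summable
  have hcsum : Summable fun j => c (j + 1) := by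
    have : Summable c := by
      have := (hτsum.mul_left ((n : ℝ))).add (hεsum.mul_left (Real.sqrt n))
      exact this.mul_left (2 * σmax)
    exact this.comp_injective (add_left_injective 1)
  set C : ℝ := ∑' j, c (j + 1) with hC_def
  have hbound : ∀ N : ℕ, ∑ j ∈ Finset.range N, q (j + 2) ≤ (φ 0 + C) / σmin ^ 2 := by
    intro N
    have h1' : ∑ j ∈ Finset.range N, c (j + 1) ≤ C :=
      Summable.sum_le_tsum _ (fun j _ => hcnn _) hcsum
    have h2' := htel N
    have h3' := hφnn N
    rw [le_div_iff₀ (by positivity)]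
    nlinarith
  have hqsum : Summable fun j => q (j + 2) :=
    summable_of_sum_range_le (fun j => hqnn _) hbound
  have hq0 : Tendsto (fun j => q (j + 2)) atTop (nhds 0) := hqsum.tendsto_atTop_zero
  have hq0' : Tendsto q atTop (nhds 0) := by
    rwa [← tendsto_add_atTop_iff_nat 2]
  have : Tendsto (fun k => Real.sqrt (q k)) atTop (nhds 0) := by
    have := (Real.continuous_sqrt.tendsto 0).comp hq0'
    simpa [Function.comp_def] using this
  exact this
end
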